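/- arXiv:2002.12076 — 2 statements merged into one kernel-verified Lean document; each statement's English description precedes it below -/
import Mathlib

section
/- Let f₁, f₂, η₁, η₂ be complex-valued functions analytic in a neighborhood of a point λ₀, and suppose Δ := η₁f₂ + η₂f₁ has a zero of order at least m at λ₀, where m ≥ 1. Assume f₁(λ₀) ≠ 0 or f₂(λ₀) ≠ 0. Then there exist complex constants C₀, …, C_{m−1} such that for all ν = 0, …, m−1: η₁^{<ν>}(λ₀) = Σ_{k=0}^{ν} C_k f₁^{<ν−k>}(λ₀) and η₂^{<ν>}(λ₀) = −Σ_{k=0}^{ν} C_k f₂^{<ν−k>}(λ₀), where g^{<j>} denotes the j-th derivative divided by j!. -/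
open Finset Filter Topology


/-- Divided derivative: `g^{<j>}(z) = (1/j!) g^{(j)}(z)`. -/
noncomputable def dd (g : ℂ → ℂ) (j : ℕ) (z : ℂ) : ℂ :=
  (j.factorial : ℂ)⁻¹ * iteratedDeriv j g z

lemma dd_congr {f g : ℂ → ℂ} {z : ℂ} (h : f =ᶠ[𝓝 z] g) (n : ℕ) : dd f n z = dd g n z := by
  unfold dd; rw [h.iteratedDeriv_eq n]

lemma dd_zero (f : ℂ → ℂ) (z : ℂ) : dd f 0 z = f z := by
  simp [dd]

lemma dd_deriv (f : ℂ → ℂ) (k : ℕ) (z : ℂ) :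
    dd (deriv f) k z = ((k : ℂ) + 1) * dd f (k + 1) z := by
  have h : iteratedDeriv k (deriv f) z = iteratedDeriv (k + 1) f z := by
    rw [iteratedDeriv_succ']
  rw [dd, dd, h, Nat.factorial_succ]
  have h1 : ((k.factorial : ℂ)) ≠ 0 := Nat.cast_ne_zero.mpr k.factorial_ne_zero
  have h2 : ((k : ℂ) + 1) ≠ 0 := by
    have := (Nat.cast_ne_zero (R := ℂ)).mpr (Nat.succ_ne_zero k)
    push_cast at this
    exact this
  push_cast
  field_simp

lemma iteratedDerivWithin_eq_iteratedDeriv' {s : Set ℂ} (hs : IsOpen s) {z : ℂ}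
    (hz : z ∈ s) (f : ℂ → ℂ) (n : ℕ) :
    iteratedDerivWithin n f s z = iteratedDeriv n f z := by
  rw [iteratedDerivWithin, iteratedDeriv, iteratedFDerivWithin_of_isOpen n hs hz]

lemma dd_add {s : Set ℂ} (hs : IsOpen s) {z : ℂ} (hz : z ∈ s) {f g : ℂ → ℂ}
    (hf : AnalyticOnNhd ℂ f s) (hg : AnalyticOnNhd ℂ g s) (n : ℕ) :
    dd (fun w => f w + g w) n z = dd f n z + dd g n z := by
  have hfc : ContDiffOn ℂ n f s := hf.contDiffOn hs.uniqueDiffOn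
  have hgc : ContDiffOn ℂ n g s := hg.contDiffOn hs.uniqueDiffOn
  have h := iteratedDerivWithin_add hz hs.uniqueDiffOn (hfc z hz) (hgc z hz)
  rw [iteratedDerivWithin_eq_iteratedDeriv' hs hz,
    iteratedDerivWithin_eq_iteratedDeriv' hs hz,
    iteratedDerivWithin_eq_iteratedDeriv' hs hz] at h
  have : (fun w => f w + g w) = f + g := rfl
  rw [dd, dd, dd, this, h, mul_add]

lemma dd_sub {s : Set ℂ} (hs : IsOpen s) {z : ℂ} (hz : z ∈ s) {f g : ℂ → ℂ}
    (hf : AnalyticOnNhd ℂ f s) (hg : AnalyticOnNhd ℂ g s) (n : ℕ) :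
    dd (fun w => f w - g w) n z = dd f n z - dd g n z := by
  have hfc : ContDiffOn ℂ n f s := hf.contDiffOn hs.uniqueDiffOn
  have hgc : ContDiffOn ℂ n g s := hg.contDiffOn hs.uniqueDiffOn
  have h := iteratedDerivWithin_sub hz hs.uniqueDiffOn (hfc z hz) (hgc z hz)
  rw [iteratedDerivWithin_eq_iteratedDeriv' hs hz,
    iteratedDerivWithin_eq_iteratedDeriv' hs hz,
    iteratedDerivWithin_eq_iteratedDeriv' hs hz] at h
  have : (fun w => f w - g w) = f - g := rfl
  rw [dd, dd, dd, this, h, mul_sub]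

lemma sum_key (a b : ℕ → ℂ) (n : ℕ) :
    (∑ k ∈ range (n + 1), ((k : ℂ) + 1) * (a (k + 1) * b (n - k)))
      + ∑ k ∈ range (n + 1), (((n - k : ℕ) : ℂ) + 1) * (a k * b (n - k + 1))
    = ((n : ℂ) + 1) * ∑ k ∈ range (n + 2), a k * b (n + 1 - k) := by
  rw [Finset.mul_sum]
  have hsplit : ∀ k ∈ range (n + 2), ((n : ℂ) + 1) * (a k * b (n + 1 - k))
      = (k : ℂ) * (a k * b (n + 1 - k)) + ((n + 1 - k : ℕ) : ℂ) * (a k * b (n + 1 - k)) := by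
    intro k hk
    rw [mem_range] at hk
    have hkle : k ≤ n + 1 := by omega
    have : ((n + 1 - k : ℕ) : ℂ) = (n : ℂ) + 1 - (k : ℂ) := by
      push_cast [hkle]
      ring
    rw [this]; ring
  rw [Finset.sum_congr rfl hsplit, Finset.sum_add_distrib]
  congr 1
  · rw [Finset.sum_range_succ' (fun k => (k : ℂ) * (a k * b (n + 1 - k))) (n + 1)]
    simp only [Nat.cast_zero, zero_mul, add_zero]
    refine Finset.sum_congr rfl fun k hk => ?_
    rw [mem_range] at hk
    have h1 : n + 1 - (k + 1) = n - k := by omega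
    push_cast [h1]
    ring
  · symm
    rw [Finset.sum_range_succ]
    simp only [Nat.sub_self, Nat.cast_zero, zero_mul, add_zero]
    refine Finset.sum_congr rfl fun k hk => ?_
    rw [mem_range] at hk
    have h1 : n + 1 - k = n - k + 1 := by omega
    rw [h1]
    push_cast
    ring

lemma dd_mul {s : Set ℂ} (hs : IsOpen s) :
    ∀ (n : ℕ) (f g : ℂ → ℂ), AnalyticOnNhd ℂ f s → AnalyticOnNhd ℂ g s →
    ∀ z ∈ s, dd (fun w => f w * g w) n z = ∑ k ∈ range (n + 1), dd f k z * dd g (n - k) z := by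
  intro n
  induction n with
  | zero =>
    intro f g hf hg z hz
    rw [Finset.sum_range_one, dd_zero, dd_zero, dd_zero]
  | succ n IH =>
    intro f g hf hg z hz
    have hf' : AnalyticOnNhd ℂ (deriv f) s := hf.deriv
    have hg' : AnalyticOnNhd ℂ (deriv g) s := hg.deriv
    have hnz : ((n : ℂ) + 1) ≠ 0 := by
      have := (Nat.cast_ne_zero (R := ℂ)).mpr (Nat.succ_ne_zero n)
      push_cast at this
      exact this
    apply mul_left_cancel₀ hnz
    have h1 : ((n : ℂ) + 1) * dd (fun w => f w * g w) (n + 1) z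
        = dd (deriv fun w => f w * g w) n z := (dd_deriv _ n z).symm
    rw [h1]
    have h2 : (deriv fun w => f w * g w)
        =ᶠ[𝓝 z] fun w => deriv f w * g w + f w * deriv g w := by
      filter_upwards [hs.mem_nhds hz] with w hw
      exact deriv_mul ((hf w hw).differentiableAt) ((hg w hw).differentiableAt)
    rw [dd_congr h2 n,
      dd_add hs hz (show AnalyticOnNhd ℂ (fun w => deriv f w * g w) s from
          fun w hw => (hf' w hw).mul (hg w hw))
        (show AnalyticOnNhd ℂ (fun w => f w * deriv g w) s from
          fun w hw => (hf w hw).mul (hg' w hw)) n,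
      IH (deriv f) g hf' hg z hz, IH f (deriv g) hf hg' z hz]
    have e1 : ∀ k ∈ range (n + 1), dd (deriv f) k z * dd g (n - k) z
        = ((k : ℂ) + 1) * (dd f (k + 1) z * dd g (n - k) z) := by
      intro k _; rw [dd_deriv]; ring
    have e2 : ∀ k ∈ range (n + 1), dd f k z * dd (deriv g) (n - k) z
        = (((n - k : ℕ) : ℂ) + 1) * (dd f k z * dd g (n - k + 1) z) := by
      intro k _; rw [dd_deriv]; ring
    rw [Finset.sum_congr rfl e1, Finset.sum_congr rfl e2]
    exact sum_key (fun k => dd f k z) (fun k => dd g k z) n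

lemma aux_main (f fo u uo : ℂ → ℂ) (z : ℂ) (m : ℕ)
    (hf : AnalyticAt ℂ f z) (hfo : AnalyticAt ℂ fo z) (hu : AnalyticAt ℂ u z)
    (huo : AnalyticAt ℂ uo z) (hfz : f z ≠ 0)
    (hΔ : ∀ ν < m, dd (fun w => u w * fo w + uo w * f w) ν z = 0) :
    ∃ C : ℕ → ℂ, ∀ ν < m,
      dd u ν z = ∑ k ∈ range (ν + 1), C k * dd f (ν - k) z ∧
      dd uo ν z = -∑ k ∈ range (ν + 1), C k * dd fo (ν - k) z := by
  have hev : ∀ᶠ w in 𝓝 z, AnalyticAt ℂ f w ∧ AnalyticAt ℂ fo w ∧ AnalyticAt ℂ u w ∧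
      AnalyticAt ℂ uo w ∧ f w ≠ 0 :=
    hf.eventually_analyticAt.and (hfo.eventually_analyticAt.and
      (hu.eventually_analyticAt.and (huo.eventually_analyticAt.and
        (hf.continuousAt.eventually_ne hfz))))
  rw [Filter.eventually_iff, mem_nhds_iff] at hev
  obtain ⟨s, hsSub, hsOpen, hzs⟩ := hev
  have hfA : AnalyticOnNhd ℂ f s := fun w hw => (hsSub hw).1
  have hfoA : AnalyticOnNhd ℂ fo s := fun w hw => (hsSub hw).2.1
  have huA : AnalyticOnNhd ℂ u s := fun w hw => (hsSub hw).2.2.1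
  have huoA : AnalyticOnNhd ℂ uo s := fun w hw => (hsSub hw).2.2.2.1
  have hne : ∀ w ∈ s, f w ≠ 0 := fun w hw => (hsSub hw).2.2.2.2
  set h : ℂ → ℂ := fun w => u w * (f w)⁻¹ with hh
  have hhA : AnalyticOnNhd ℂ h s := fun w hw => (huA w hw).mul ((hfA w hw).inv (hne w hw))
  refine ⟨fun k => dd h k z, fun ν hν => ?_⟩
  constructor
  · -- part (a)
    have heq : u =ᶠ[𝓝 z] fun w => h w * f w := by
      filter_upwards [hsOpen.mem_nhds hzs] with w hw
      rw [hh]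
      field_simp [hne w hw]
    rw [dd_congr heq ν, dd_mul hsOpen ν h f hhA hfA z hzs]
  · -- part (b)
    set g : ℂ → ℂ := fun w => uo w + h w * fo w with hg
    have hgA : AnalyticOnNhd ℂ g s :=
      fun w hw => (huoA w hw).add ((hhA w hw).mul (hfoA w hw))
    have hgf0 : ∀ ν < m, dd (fun w => g w * f w) ν z = 0 := by
      intro ν hν
      have heq : (fun w => g w * f w) =ᶠ[𝓝 z] fun w => u w * fo w + uo w * f w := by
        filter_upwards [hsOpen.mem_nhds hzs] with w hw
        rw [hg, hh]
        field_simp [hne w hw]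
        ring
      rw [dd_congr heq ν]
      exact hΔ ν hν
    have hg0 : ∀ ν, ν < m → dd g ν z = 0 := by
      intro ν
      induction ν using Nat.strong_induction_on with
      | _ ν IH =>
        intro hν
        have hthis := hgf0 ν hν
        rw [dd_mul hsOpen ν g f hgA hfA z hzs, Finset.sum_range_succ] at hthis
        have hz0 : ∑ k ∈ range ν, dd g k z * dd f (ν - k) z = 0 :=
          Finset.sum_eq_zero fun k hk => by
            rw [IH k (mem_range.mp hk) (lt_trans (mem_range.mp hk) hν), zero_mul]
        rw [hz0, zero_add, Nat.sub_self, dd_zero] at hthis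
        exact (mul_eq_zero.mp hthis).resolve_right hfz
    have huoeq : uo = fun w => g w - h w * fo w := by
      funext w
      rw [hg]
      ring
    rw [huoeq, dd_sub hsOpen hzs hgA (show AnalyticOnNhd ℂ (fun w => h w * fo w) s from
        fun w hw => (hhA w hw).mul (hfoA w hw)) ν,
      hg0 ν hν, dd_mul hsOpen ν h fo hhA hfoA z hzs, zero_sub]

/-- If `f₁, f₂, η₁, η₂` are analytic near `lam₀`, `Δ = η₁f₂ + η₂f₁` has a zero of
order at least `m ≥ 1` at `lam₀`, and `f₁(lam₀) ≠ 0` or `f₂(lam₀) ≠ 0`, then there exist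
constants `C₀, …, C_{m-1}` with
`η₁^{<ν>}(lam₀) = Σ_{k≤ν} C_k f₁^{<ν-k>}(lam₀)` and
`η₂^{<ν>}(lam₀) = −Σ_{k≤ν} C_k f₂^{<ν-k>}(lam₀)` for `ν = 0, …, m-1`. -/
theorem stmt2 (f₁ f₂ η₁ η₂ : ℂ → ℂ) (lam₀ : ℂ) (m : ℕ) (hm : 1 ≤ m)
    (hf₁ : AnalyticAt ℂ f₁ lam₀) (hf₂ : AnalyticAt ℂ f₂ lam₀)
    (hη₁ : AnalyticAt ℂ η₁ lam₀) (hη₂ : AnalyticAt ℂ η₂ lam₀)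
    (hΔ : ∀ ν < m, dd (fun z => η₁ z * f₂ z + η₂ z * f₁ z) ν lam₀ = 0)
    (hsep : f₁ lam₀ ≠ 0 ∨ f₂ lam₀ ≠ 0) :
    ∃ C : ℕ → ℂ, ∀ ν < m,
      dd η₁ ν lam₀ = ∑ k ∈ Finset.range (ν + 1), C k * dd f₁ (ν - k) lam₀ ∧
      dd η₂ ν lam₀ = -∑ k ∈ Finset.range (ν + 1), C k * dd f₂ (ν - k) lam₀ := by
  rcases hsep with h1 | h2
  · exact aux_main f₁ f₂ η₁ η₂ lam₀ m hf₁ hf₂ hη₁ hη₂ h1 hΔ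
  · have hΔ' : ∀ ν < m, dd (fun w => η₂ w * f₁ w + η₁ w * f₂ w) ν lam₀ = 0 := by
      intro ν hν
      have : (fun w => η₂ w * f₁ w + η₁ w * f₂ w)
          = fun w => η₁ w * f₂ w + η₂ w * f₁ w := by
        funext w; ring
      rw [this]
      exact hΔ ν hν
    obtain ⟨C, hC⟩ := aux_main f₂ f₁ η₂ η₁ lam₀ m hf₂ hf₁ hη₂ hη₁ h2 hΔ'
    refine ⟨fun k => -(C k), fun ν hν => ?_⟩
    obtain ⟨h₂eq, h₁eq⟩ := hC ν hν
    constructor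
    · rw [h₁eq]
      rw [← Finset.sum_neg_distrib]
      exact Finset.sum_congr rfl fun k _ => by ring
    · rw [h₂eq]
      rw [← Finset.sum_neg_distrib]
      exact Finset.sum_congr rfl fun k _ => by ring
end

section
/- Let {τₙ}_{n≥0} be complex numbers with τₙ ≠ τ_k and τₙ ≠ conj(τ_k) for n ≠ k, such that {cos(τₙ t)}_{n≥0} is a Riesz basis of L²(0, 2π). Then the vector functions gₙ⁰(t) = (sin(τₙπ)sin(τₙt), −cos(τₙπ)cos(τₙt)) form a Riesz basis of H = L²(0,π) ⊕ L²(0,π). -/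
open MeasureTheory

section Stmt11Aux
open Set
open scoped ENNReal NNReal


lemma stmt11_par (x y : ℂ) : ‖x + y‖ ^ 2 + ‖x - y‖ ^ 2 = 2 * (‖y‖ ^ 2 + ‖x‖ ^ 2) := by
  simp only [Complex.sq_norm, Complex.normSq_apply, Complex.add_re,
    Complex.add_im, Complex.sub_re, Complex.sub_im]
  ring

lemma stmt11_split_real (g : ℝ → ℝ) (hg1 : IntervalIntegrable g volume 0 Real.pi)
    (hg2 : IntervalIntegrable g volume Real.pi (2 * Real.pi)) :
    (∫ s in (0:ℝ)..(2 * Real.pi), g s)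
      = (∫ t in (0:ℝ)..Real.pi, g (Real.pi - t)) + ∫ t in (0:ℝ)..Real.pi, g (Real.pi + t) := by
  have h1 : (∫ t in (0:ℝ)..Real.pi, g (Real.pi - t)) = ∫ s in (0:ℝ)..Real.pi, g s := by
    rw [intervalIntegral.integral_comp_sub_left]
    norm_num
  have h2 : (∫ t in (0:ℝ)..Real.pi, g (Real.pi + t)) = ∫ s in Real.pi..(2 * Real.pi), g s := by
    rw [intervalIntegral.integral_comp_add_left]
    norm_num [two_mul]
  rw [h1, h2, intervalIntegral.integral_add_adjacent_intervals hg1 hg2]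

lemma stmt11_key (τ : ℕ → ℂ) (N : ℕ) (b : ℕ → ℂ) :
    (∫ s in (0:ℝ)..(2 * Real.pi),
        ‖∑ n ∈ Finset.range N, b n * Complex.cos (τ n * (s : ℂ))‖ ^ 2)
      = 2 * ∫ t in (0:ℝ)..Real.pi,
          (‖∑ n ∈ Finset.range N,
              b n * (Complex.sin (τ n * (Real.pi : ℂ)) * Complex.sin (τ n * (t : ℂ)))‖ ^ 2 +
           ‖∑ n ∈ Finset.range N,
              b n * (-(Complex.cos (τ n * (Real.pi : ℂ)) * Complex.cos (τ n * (t : ℂ))))‖ ^ 2) := by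
  set S : ℝ → ℂ := fun t => ∑ n ∈ Finset.range N,
    b n * (Complex.sin (τ n * (Real.pi : ℂ)) * Complex.sin (τ n * (t : ℂ))) with hS
  set C : ℝ → ℂ := fun t => ∑ n ∈ Finset.range N,
    b n * (Complex.cos (τ n * (Real.pi : ℂ)) * Complex.cos (τ n * (t : ℂ))) with hC
  have hcont : Continuous fun s : ℝ =>
      ‖∑ n ∈ Finset.range N, b n * Complex.cos (τ n * (s : ℂ))‖ ^ 2 := by
    apply Continuous.pow
    apply Continuous.norm
    exact continuous_finset_sum _ fun n _ =>
      continuous_const.mul (Complex.continuous_cos.comp (continuous_const.mul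
        Complex.continuous_ofReal))
  have hSc : Continuous S :=
    continuous_finset_sum _ fun n _ => continuous_const.mul (continuous_const.mul
      (Complex.continuous_sin.comp (continuous_const.mul Complex.continuous_ofReal)))
  have hCc : Continuous C :=
    continuous_finset_sum _ fun n _ => continuous_const.mul (continuous_const.mul
      (Complex.continuous_cos.comp (continuous_const.mul Complex.continuous_ofReal)))
  have hsub : ∀ t : ℝ,
      (∑ n ∈ Finset.range N, b n * Complex.cos (τ n * ((Real.pi - t : ℝ) : ℂ))) = C t + S t := by
    intro t
    rw [← Finset.sum_add_distrib]
    refine Finset.sum_congr rfl fun n _ => ?_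
    push_cast
    rw [mul_sub, Complex.cos_sub]
    ring
  have hadd : ∀ t : ℝ,
      (∑ n ∈ Finset.range N, b n * Complex.cos (τ n * ((Real.pi + t : ℝ) : ℂ))) = C t - S t := by
    intro t
    rw [← Finset.sum_sub_distrib]
    refine Finset.sum_congr rfl fun n _ => ?_
    push_cast
    rw [mul_add, Complex.cos_add]
    ring
  have hneg : ∀ t : ℝ, (∑ n ∈ Finset.range N,
      b n * (-(Complex.cos (τ n * (Real.pi : ℂ)) * Complex.cos (τ n * (t : ℂ))))) = -C t := by
    intro t
    simp [hC, mul_neg, Finset.sum_neg_distrib]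
  rw [stmt11_split_real _ (hcont.intervalIntegrable _ _) (hcont.intervalIntegrable _ _)]
  have e1 : (∫ t in (0:ℝ)..Real.pi,
        ‖∑ n ∈ Finset.range N, b n * Complex.cos (τ n * ((Real.pi - t : ℝ) : ℂ))‖ ^ 2)
      + (∫ t in (0:ℝ)..Real.pi,
        ‖∑ n ∈ Finset.range N, b n * Complex.cos (τ n * ((Real.pi + t : ℝ) : ℂ))‖ ^ 2)
      = ∫ t in (0:ℝ)..Real.pi, (‖C t + S t‖ ^ 2 + ‖C t - S t‖ ^ 2) := by
    rw [← intervalIntegral.integral_add]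
    · apply intervalIntegral.integral_congr
      intro t _
      simp only [hsub, hadd]
    · exact (hcont.comp (continuous_const.sub continuous_id)).intervalIntegrable _ _
    · exact (hcont.comp (continuous_const.add continuous_id)).intervalIntegrable _ _
  rw [e1, ← intervalIntegral.integral_const_mul]
  apply intervalIntegral.integral_congr
  intro t _
  simp only [hneg, norm_neg]
  rw [stmt11_par]



lemma stmt11_II {c d : ℝ} (hcd : c ≤ d) (g : ℝ → ℂ)
    (hg : MemLp g 2 (volume.restrict (Set.Ioo c d))) (φ : ℝ → ℂ) (hφ : Continuous φ) :
    IntervalIntegrable (fun s => g s * φ s) volume c d := by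
  haveI : IsFiniteMeasure (volume.restrict (Set.Ioo c d)) :=
    ⟨by rw [Measure.restrict_apply_univ]; exact measure_Ioo_lt_top⟩
  have hgi : Integrable g (volume.restrict (Set.Ioo c d)) :=
    hg.integrable (by norm_num)
  obtain ⟨C, hC⟩ := (isCompact_Icc (a := c) (b := d)).exists_bound_of_continuousOn hφ.continuousOn
  have hbd : ∀ᵐ s ∂(volume.restrict (Set.Ioo c d)), ‖φ s‖ ≤ C := by
    filter_upwards [ae_restrict_mem measurableSet_Ioo] with s hs
    exact hC s (Set.mem_Icc_of_Ioo hs)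
  have h1 : Integrable (fun s => φ s * g s) (volume.restrict (Set.Ioo c d)) :=
    hgi.bdd_mul (hφ.aestronglyMeasurable) hbd
  have h2 : Integrable (fun s => g s * φ s) (volume.restrict (Set.Ioo c d)) := by
    simpa [mul_comm] using h1
  rw [intervalIntegrable_iff, uIoc_of_le hcd]
  exact (integrableOn_Ioc_iff_integrableOn_Ioo).2 h2

lemma stmt11_memLp_add {f : ℝ → ℂ} {μ ν : Measure ℝ} (hμ : MemLp f 2 μ) (hν : MemLp f 2 ν) :
    MemLp f 2 (μ + ν) := by
  refine ⟨hμ.1.add_measure hν.1, ?_⟩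
  rw [eLpNorm_eq_lintegral_rpow_enorm_toReal (by norm_num) (by norm_num), lintegral_add_measure]
  apply ENNReal.rpow_lt_top_of_nonneg (by norm_num)
  have h1 := hμ.2
  have h2 := hν.2
  rw [eLpNorm_eq_lintegral_rpow_enorm_toReal (by norm_num) (by norm_num)] at h1 h2
  have h1' : (∫⁻ x, ‖f x‖ₑ ^ (2 : ℝ≥0∞).toReal ∂μ) ≠ ⊤ := by
    intro hc; rw [hc] at h1; simp at h1
  have h2' : (∫⁻ x, ‖f x‖ₑ ^ (2 : ℝ≥0∞).toReal ∂ν) ≠ ⊤ := by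
    intro hc; rw [hc] at h2; simp at h2
  exact ENNReal.add_ne_top.2 ⟨h1', h2'⟩

lemma stmt11_mp_refl : MeasurePreserving (fun s : ℝ => Real.pi - s)
    (volume.restrict (Set.Ioo 0 Real.pi)) (volume.restrict (Set.Ioo 0 Real.pi)) := by
  have base : MeasurePreserving (fun s : ℝ => Real.pi - s) volume volume :=
    Measure.measurePreserving_sub_left volume Real.pi
  have hpre : (fun s : ℝ => Real.pi - s) ⁻¹' (Set.Ioo 0 Real.pi) = Set.Ioo 0 Real.pi := by
    ext s
    simp only [Set.mem_preimage, Set.mem_Ioo]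
    constructor <;> rintro ⟨h1, h2⟩ <;> constructor <;> linarith
  have := base.restrict_preimage (measurableSet_Ioo (a := (0:ℝ)) (b := Real.pi))
  rwa [hpre] at this

lemma stmt11_mp_trans : MeasurePreserving (fun s : ℝ => s - Real.pi)
    (volume.restrict (Set.Ioo Real.pi (2 * Real.pi)))
    (volume.restrict (Set.Ioo 0 Real.pi)) := by
  have base : MeasurePreserving (fun s : ℝ => s - Real.pi) volume volume :=
    measurePreserving_sub_right volume Real.pi
  have hpre : (fun s : ℝ => s - Real.pi) ⁻¹' (Set.Ioo 0 Real.pi)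
      = Set.Ioo Real.pi (2 * Real.pi) := by
    ext s
    simp only [Set.mem_preimage, Set.mem_Ioo]
    constructor <;> rintro ⟨h1, h2⟩ <;> constructor <;> linarith
  have := base.restrict_preimage (measurableSet_Ioo (a := (0:ℝ)) (b := Real.pi))
  rwa [hpre] at this

lemma stmt11_mp_trans' : MeasurePreserving (fun s : ℝ => Real.pi + s)
    (volume.restrict (Set.Ioo 0 Real.pi))
    (volume.restrict (Set.Ioo Real.pi (2 * Real.pi))) := by
  have base : MeasurePreserving (fun s : ℝ => Real.pi + s) volume volume :=
    measurePreserving_add_left volume Real.pi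
  have hpre : (fun s : ℝ => Real.pi + s) ⁻¹' (Set.Ioo Real.pi (2 * Real.pi))
      = Set.Ioo 0 Real.pi := by
    ext s
    simp only [Set.mem_preimage, Set.mem_Ioo]
    constructor <;> rintro ⟨h1, h2⟩ <;> constructor <;> linarith
  have := base.restrict_preimage (measurableSet_Ioo (a := Real.pi) (b := 2 * Real.pi))
  rwa [hpre] at this

lemma stmt11_complete (τ : ℕ → ℂ)
    (hcomp2 : ∀ f : ℝ → ℂ,
      MemLp f 2 (volume.restrict (Set.Ioo 0 (2 * Real.pi))) →
      (∀ n, (∫ t in (0:ℝ)..(2 * Real.pi), f t * Complex.cos (τ n * (t : ℂ))) = 0) →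
      f =ᵐ[volume.restrict (Set.Ioo 0 (2 * Real.pi))] 0)
    (f₁ f₂ : ℝ → ℂ)
    (hf₁ : MemLp f₁ 2 (volume.restrict (Set.Ioo 0 Real.pi)))
    (hf₂ : MemLp f₂ 2 (volume.restrict (Set.Ioo 0 Real.pi)))
    (horth : ∀ n, (∫ t in (0:ℝ)..Real.pi,
        (f₁ t * (Complex.sin (τ n * (Real.pi : ℂ)) * Complex.sin (τ n * (t : ℂ))) +
         f₂ t * (-(Complex.cos (τ n * (Real.pi : ℂ)) * Complex.cos (τ n * (t : ℂ)))))) = 0) :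
    (f₁ =ᵐ[volume.restrict (Set.Ioo 0 Real.pi)] 0 ∧
     f₂ =ᵐ[volume.restrict (Set.Ioo 0 Real.pi)] 0) := by
  have hπ : (0:ℝ) < Real.pi := Real.pi_pos
  set a : ℝ → ℂ := fun t => (1/2 : ℂ) * (f₁ t - f₂ t) with ha_def
  set bb : ℝ → ℂ := fun t => (-(1/2) : ℂ) * (f₁ t + f₂ t) with hb_def
  set f : ℝ → ℂ := fun s => if s ≤ Real.pi then a (Real.pi - s) else bb (s - Real.pi) with hf_def
  have ha : MemLp a 2 (volume.restrict (Set.Ioo 0 Real.pi)) := (hf₁.sub hf₂).const_mul _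
  have hbmem : MemLp bb 2 (volume.restrict (Set.Ioo 0 Real.pi)) := (hf₁.add hf₂).const_mul _
  have hfa : MemLp (fun s => a (Real.pi - s)) 2 (volume.restrict (Set.Ioo 0 Real.pi)) :=
    ha.comp_measurePreserving stmt11_mp_refl
  have hfb : MemLp (fun s => bb (s - Real.pi)) 2
      (volume.restrict (Set.Ioo Real.pi (2 * Real.pi))) :=
    hbmem.comp_measurePreserving stmt11_mp_trans
  have hfmem1 : MemLp f 2 (volume.restrict (Set.Ioo 0 Real.pi)) := by
    apply hfa.ae_eq
    filter_upwards [ae_restrict_mem measurableSet_Ioo] with s hs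
    simp [hf_def, hs.2.le]
  have hfmem2 : MemLp f 2 (volume.restrict (Set.Ioo Real.pi (2 * Real.pi))) := by
    apply hfb.ae_eq
    filter_upwards [ae_restrict_mem measurableSet_Ioo] with s hs
    simp [hf_def, not_le.2 hs.1]
  have m1 : volume.restrict (Set.Ioc (0:ℝ) Real.pi) = volume.restrict (Set.Ioo 0 Real.pi) :=
    (Measure.restrict_congr_set Ioo_ae_eq_Ioc).symm
  have m2 : volume.restrict (Set.Ioc Real.pi (2 * Real.pi))
      = volume.restrict (Set.Ioo Real.pi (2 * Real.pi)) :=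
    (Measure.restrict_congr_set Ioo_ae_eq_Ioc).symm
  have hfmem : MemLp f 2 (volume.restrict (Set.Ioo 0 (2 * Real.pi))) := by
    have e0 : volume.restrict (Set.Ioo (0:ℝ) (2 * Real.pi))
        = volume.restrict (Set.Ioc 0 (2 * Real.pi)) :=
      Measure.restrict_congr_set Ioo_ae_eq_Ioc
    have e1 : Set.Ioc (0:ℝ) (2 * Real.pi) = Set.Ioc 0 Real.pi ∪ Set.Ioc Real.pi (2 * Real.pi) :=
      (Set.Ioc_union_Ioc_eq_Ioc hπ.le (by linarith)).symm
    rw [e0]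
    have h12 : MemLp f 2 (volume.restrict (Set.Ioc (0:ℝ) Real.pi)
        + volume.restrict (Set.Ioc Real.pi (2 * Real.pi))) := by
      apply stmt11_memLp_add
      · rw [m1]; exact hfmem1
      · rw [m2]; exact hfmem2
    apply h12.mono_measure
    rw [e1]
    exact Measure.restrict_union_le _ _
  -- orthogonality on (0, 2π)
  have horth2 : ∀ n, (∫ t in (0:ℝ)..(2 * Real.pi), f t * Complex.cos (τ n * (t : ℂ))) = 0 := by
    intro n
    have hcos : Continuous fun s : ℝ => Complex.cos (τ n * (s : ℂ)) :=
      Complex.continuous_cos.comp (continuous_const.mul Complex.continuous_ofReal)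
    have II1 : IntervalIntegrable (fun s => f s * Complex.cos (τ n * (s : ℂ))) volume
        0 Real.pi := stmt11_II hπ.le f hfmem1 _ hcos
    have II2 : IntervalIntegrable (fun s => f s * Complex.cos (τ n * (s : ℂ))) volume
        Real.pi (2 * Real.pi) := stmt11_II (by linarith) f hfmem2 _ hcos
    have hsplitn : (∫ t in (0:ℝ)..(2 * Real.pi), f t * Complex.cos (τ n * (t : ℂ)))
        = (∫ s in (0:ℝ)..Real.pi, f s * Complex.cos (τ n * (s : ℂ)))
          + ∫ s in Real.pi..(2 * Real.pi), f s * Complex.cos (τ n * (s : ℂ)) :=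
      (intervalIntegral.integral_add_adjacent_intervals II1 II2).symm
    have hA : (∫ s in (0:ℝ)..Real.pi, f s * Complex.cos (τ n * (s : ℂ)))
        = ∫ t in (0:ℝ)..Real.pi,
            f (Real.pi - t) * Complex.cos (τ n * ((Real.pi - t : ℝ) : ℂ)) := by
      rw [intervalIntegral.integral_comp_sub_left
        (fun s => f s * Complex.cos (τ n * (s : ℂ))) Real.pi]
      norm_num
    have hB : (∫ s in Real.pi..(2 * Real.pi), f s * Complex.cos (τ n * (s : ℂ)))
        = ∫ t in (0:ℝ)..Real.pi,
            f (Real.pi + t) * Complex.cos (τ n * ((Real.pi + t : ℝ) : ℂ)) := by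
      rw [intervalIntegral.integral_comp_add_left
        (fun s => f s * Complex.cos (τ n * (s : ℂ))) Real.pi]
      norm_num [two_mul]
    have IIA : IntervalIntegrable (fun t =>
        f (Real.pi - t) * Complex.cos (τ n * ((Real.pi - t : ℝ) : ℂ))) volume 0 Real.pi := by
      have := (II1.comp_sub_left Real.pi).symm
      simpa using this
    have IIB : IntervalIntegrable (fun t =>
        f (Real.pi + t) * Complex.cos (τ n * ((Real.pi + t : ℝ) : ℂ))) volume 0 Real.pi := by
      have := II2.comp_add_left Real.pi
      simpa [two_mul] using this
    rw [hsplitn, hA, hB, ← intervalIntegral.integral_add IIA IIB]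
    rw [← horth n]
    apply intervalIntegral.integral_congr_ae
    apply Filter.Eventually.of_forall
    intro t ht
    rw [uIoc_of_le hπ.le] at ht
    have h1 : f (Real.pi - t) = a t := by
      simp [hf_def, show Real.pi - t ≤ Real.pi by linarith [ht.1]]
    have h2 : f (Real.pi + t) = bb t := by
      simp [hf_def, show ¬ Real.pi + t ≤ Real.pi by push_neg; linarith [ht.1]]
    rw [h1, h2, ha_def, hb_def]
    push_cast
    rw [show τ n * ((Real.pi : ℂ) - (t : ℂ)) = τ n * Real.pi - τ n * t by ring,
      show τ n * ((Real.pi : ℂ) + (t : ℂ)) = τ n * Real.pi + τ n * t by ring,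
      Complex.cos_sub, Complex.cos_add]
    ring
  have happly := hcomp2 f hfmem horth2
  have h0a : f =ᵐ[volume.restrict (Set.Ioo 0 Real.pi)] 0 :=
    happly.filter_mono (ae_mono (Measure.restrict_mono
      (Set.Ioo_subset_Ioo le_rfl (by linarith)) le_rfl))
  have h0b : f =ᵐ[volume.restrict (Set.Ioo Real.pi (2 * Real.pi))] 0 :=
    happly.filter_mono (ae_mono (Measure.restrict_mono
      (Set.Ioo_subset_Ioo (by linarith) le_rfl) le_rfl))
  have haz : a =ᵐ[volume.restrict (Set.Ioo 0 Real.pi)] 0 := by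
    have hcomp := stmt11_mp_refl.quasiMeasurePreserving.ae_eq h0a
    filter_upwards [hcomp, ae_restrict_mem measurableSet_Ioo] with s hs hmem
    have : f (Real.pi - s) = 0 := hs
    rw [show f (Real.pi - s) = a s by
      simp [hf_def, show Real.pi - s ≤ Real.pi by linarith [hmem.1]]] at this
    simpa using this
  have hbz : bb =ᵐ[volume.restrict (Set.Ioo 0 Real.pi)] 0 := by
    have hcomp := stmt11_mp_trans'.quasiMeasurePreserving.ae_eq h0b
    filter_upwards [hcomp, ae_restrict_mem measurableSet_Ioo] with s hs hmem
    have : f (Real.pi + s) = 0 := hs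
    rw [show f (Real.pi + s) = bb s by
      simp [hf_def, show ¬ Real.pi + s ≤ Real.pi by push_neg; linarith [hmem.1]]] at this
    simpa using this
  constructor
  · filter_upwards [haz, hbz] with t h1 h2
    simp only [ha_def] at h1
    simp only [hb_def] at h2
    have h1' : (1/2 : ℂ) * (f₁ t - f₂ t) = 0 := h1
    have h2' : (-(1/2) : ℂ) * (f₁ t + f₂ t) = 0 := h2
    show f₁ t = 0
    linear_combination h1' - h2'
  · filter_upwards [haz, hbz] with t h1 h2
    have h1' : (1/2 : ℂ) * (f₁ t - f₂ t) = 0 := h1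
    have h2' : (-(1/2) : ℂ) * (f₁ t + f₂ t) = 0 := h2
    show f₂ t = 0
    linear_combination -h1' - h2'

end Stmt11Aux

/-- Let `{τₙ}` be complex numbers with `τₙ ≠ τ_k` and `τₙ ≠ conj(τ_k)` for `n ≠ k`,
such that `{cos(τₙ t)}` is a Riesz basis of `L²(0, 2π)` (complete and satisfying
two-sided ℓ² bounds for finite linear combinations). Then the vector functions
`gₙ⁰(t) = (sin(τₙπ)sin(τₙt), −cos(τₙπ)cos(τₙt))` form a Riesz basis of
`H = L²(0,π) ⊕ L²(0,π)` in the same sense. -/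
theorem stmt11 (τ : ℕ → ℂ)
    (hsep : ∀ n k, n ≠ k → τ n ≠ τ k ∧ τ n ≠ (starRingEnd ℂ) (τ k))
    (hcomp2 : ∀ f : ℝ → ℂ,
      MemLp f 2 (volume.restrict (Set.Ioo 0 (2 * Real.pi))) →
      (∀ n, (∫ t in (0:ℝ)..(2 * Real.pi), f t * Complex.cos (τ n * (t : ℂ))) = 0) →
      f =ᵐ[volume.restrict (Set.Ioo 0 (2 * Real.pi))] 0)
    (hbasis2 : ∃ M₁ M₂ : ℝ, 0 < M₁ ∧ 0 < M₂ ∧ ∀ (N : ℕ) (b : ℕ → ℂ),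
      M₁ * ∑ n ∈ Finset.range N, ‖b n‖ ^ 2 ≤
        (∫ t in (0:ℝ)..(2 * Real.pi),
          ‖∑ n ∈ Finset.range N, b n * Complex.cos (τ n * (t : ℂ))‖ ^ 2) ∧
      (∫ t in (0:ℝ)..(2 * Real.pi),
          ‖∑ n ∈ Finset.range N, b n * Complex.cos (τ n * (t : ℂ))‖ ^ 2) ≤
        M₂ * ∑ n ∈ Finset.range N, ‖b n‖ ^ 2) :
    -- completeness of `{gₙ⁰}` in `H = L²(0,π) ⊕ L²(0,π)`
    ((∀ f₁ f₂ : ℝ → ℂ,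
      MemLp f₁ 2 (volume.restrict (Set.Ioo 0 Real.pi)) →
      MemLp f₂ 2 (volume.restrict (Set.Ioo 0 Real.pi)) →
      (∀ n, (∫ t in (0:ℝ)..Real.pi,
        (f₁ t * (Complex.sin (τ n * (Real.pi : ℂ)) * Complex.sin (τ n * (t : ℂ))) +
         f₂ t * (-(Complex.cos (τ n * (Real.pi : ℂ)) * Complex.cos (τ n * (t : ℂ)))))) = 0) →
      (f₁ =ᵐ[volume.restrict (Set.Ioo 0 Real.pi)] 0 ∧
       f₂ =ᵐ[volume.restrict (Set.Ioo 0 Real.pi)] 0))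
    -- two-sided ℓ² bounds for finite combinations of `{gₙ⁰}` in the `H`-norm
    ∧ (∃ M₁ M₂ : ℝ, 0 < M₁ ∧ 0 < M₂ ∧ ∀ (N : ℕ) (b : ℕ → ℂ),
      M₁ * ∑ n ∈ Finset.range N, ‖b n‖ ^ 2 ≤
        (∫ t in (0:ℝ)..Real.pi,
          (‖∑ n ∈ Finset.range N,
              b n * (Complex.sin (τ n * (Real.pi : ℂ)) * Complex.sin (τ n * (t : ℂ)))‖ ^ 2 +
           ‖∑ n ∈ Finset.range N,
              b n * (-(Complex.cos (τ n * (Real.pi : ℂ)) * Complex.cos (τ n * (t : ℂ))))‖ ^ 2)) ∧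
      (∫ t in (0:ℝ)..Real.pi,
          (‖∑ n ∈ Finset.range N,
              b n * (Complex.sin (τ n * (Real.pi : ℂ)) * Complex.sin (τ n * (t : ℂ)))‖ ^ 2 +
           ‖∑ n ∈ Finset.range N,
              b n * (-(Complex.cos (τ n * (Real.pi : ℂ)) * Complex.cos (τ n * (t : ℂ))))‖ ^ 2)) ≤
        M₂ * ∑ n ∈ Finset.range N, ‖b n‖ ^ 2)) := by
  constructor
  · intro f₁ f₂ hf₁ hf₂ horth
    exact stmt11_complete τ hcomp2 f₁ f₂ hf₁ hf₂ horth
  · obtain ⟨M₁, M₂, hM₁, hM₂, hb⟩ := hbasis2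
    refine ⟨M₁ / 2, M₂ / 2, by linarith, by linarith, fun N b => ?_⟩
    obtain ⟨h1, h2⟩ := hb N b
    rw [stmt11_key τ N b] at h1 h2
    constructor <;> linarith
end
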